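/- Let p ≥ 3 be prime, θ, α ∈ ℚ_p with |θ − 1|_p = 1/p, |α|_p = 1, |1 − α|_p ≤ 1/p², and let λ be a weight with λ(0) = 1, λ(1) = α, |λ(i)|_p < 1 for i ≥ 2, |λ(i)|_p → 0, δ := max_{i≥2}|λ(i)|_p > 0. Then for all x, y ∈ B_{δ/p} one has ‖F⁻(x) − F⁻(y)‖ ≤ δ·‖x − y‖; in particular F⁻ is a strict contraction on B_{δ/p}. -/

import Mathlib

/-!
Put `c = 2(θ - 1)` and `B_X = (α + 1)θ + X - s_X`, so that `F⁻(x)_i = λ(i)·(1 - c(1 - x_i)/B_X)`.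
Everything is measured against `r = max(δ/p, 1/p²) < 1/p = |c|`. Since `|D_X - 4| ≤ r` and
`|s_X + 2| = 1`, we get `|s_X - 2| ≤ r`, hence `B_X = c + O(r)` has `|B_X| = |c|`. Next,
`s_X² - s_Y² = D_X - D_Y = (X - Y)·T` with `T ≡ s_X + s_Y` up to terms of size `≤ r`, and
`|s_X + s_Y| = 1`; so `|B_X - B_Y| ≤ r|X - Y| ≤ |c|·‖x - y‖`. Finally the coordinate difference
`c((1 - y_i)(B_X - B_Y) + (x_i - y_i)B_Y)/(B_X B_Y)` has norm at most `‖x - y‖`, and `|λ(i)| ≤ δ`.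
-/

open Filter Topology

namespace IsUltrametricDist

variable {E : Type*} [NormedAddCommGroup E] [IsUltrametricDist E]

lemma norm_add_le_of_le_of_le {a b : E} {c : ℝ} (ha : ‖a‖ ≤ c) (hb : ‖b‖ ≤ c) :
    ‖a + b‖ ≤ c :=
  (norm_add_le_max a b).trans (max_le ha hb)

lemma norm_sub_le_of_le_of_le {a b : E} {c : ℝ} (ha : ‖a‖ ≤ c) (hb : ‖b‖ ≤ c) :
    ‖a - b‖ ≤ c := by
  rw [sub_eq_add_neg]
  exact norm_add_le_of_le_of_le ha (by rwa [norm_neg])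

lemma norm_add_eq_left_of_norm_lt {a b : E} (h : ‖b‖ < ‖a‖) : ‖a + b‖ = ‖a‖ := by
  rw [norm_add_eq_max_of_norm_ne_norm h.ne', max_eq_left h.le]

lemma norm_tsum_sub_tsum_le {ι : Type*} [Nonempty ι] {f g : ι → E} {c : ℝ}
    (hf : Summable f) (hg : Summable g) (h : ∀ i, ‖f i - g i‖ ≤ c) :
    ‖∑' i, f i - ∑' i, g i‖ ≤ c := by
  rw [← hf.tsum_sub hg]
  exact norm_tsum_le_of_forall_le h

lemma summable_of_tendsto_norm_zero [CompleteSpace E] {f : ℕ → E}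
    (hf : Tendsto (fun i => ‖f i‖) atTop (𝓝 0)) : Summable f := by
  apply NonarchimedeanAddGroup.summable_of_tendsto_cofinite_zero
  rwa [Nat.cofinite_eq_atTop, tendsto_zero_iff_norm_tendsto_zero]

end IsUltrametricDist

lemma Padic.norm_two_eq_one {p : ℕ} [hp : Fact p.Prime] (hp2 : p ≠ 2) :
    ‖(2 : ℚ_[p])‖ = 1 := by
  exact_mod_cast Padic.norm_natCast_eq_one_iff.mpr
    ((Nat.coprime_primes hp.out Nat.prime_two).mpr hp2)

lemma norm_mul_le_of_norm_le_one {R : Type*} [SeminormedRing R] {a b : R} (ha : ‖a‖ ≤ 1) :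
    ‖a * b‖ ≤ ‖b‖ :=
  (norm_mul_le a b).trans (mul_le_of_le_one_left (norm_nonneg b) ha)

namespace Potts

open IsUltrametricDist

variable {K : Type*} [NormedField K] [IsUltrametricDist K]

def disc (θ α Z : K) : K := (Z + θ * (1 - α)) ^ 2 + 4 * α * (Z + 1)

def fMinus (θ α Z s z : K) : K :=
  (2 * (θ - 1) * z + (α - 1) * θ + Z - s + 2) / ((α + 1) * θ + Z - s)

lemma norm_four_add_eq_one (h2 : ‖(2 : K)‖ = 1) {a : K} (ha : ‖a‖ < 1) : ‖4 + a‖ = 1 := by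
  have h4 : ‖(4 : K)‖ = 1 := by rw [show (4 : K) = 2 * 2 by norm_num, norm_mul, h2, one_mul]
  rw [norm_add_eq_left_of_norm_lt (h4 ▸ ha), h4]

lemma norm_sub_two_le_of_norm_sq_sub_four_le (h2 : ‖(2 : K)‖ = 1) {s : K} {r : ℝ}
    (hs : ‖s - 2‖ < 1) (h : ‖s ^ 2 - 4‖ ≤ r) : ‖s - 2‖ ≤ r := by
  have hplus : ‖s + 2‖ = 1 := by
    rw [show s + 2 = 4 + (s - 2) by ring, norm_four_add_eq_one h2 hs]
  rwa [show s ^ 2 - 4 = (s - 2) * (s + 2) by ring, norm_mul, hplus, mul_one] at h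

lemma norm_four_mul_le (a : K) : ‖4 * a‖ ≤ ‖a‖ :=
  norm_mul_le_of_norm_le_one (by exact_mod_cast norm_natCast_le_one K 4)

variable {θ α Z s : K} {r : ℝ}

lemma norm_disc_sub_four_le (hθ : ‖θ‖ ≤ 1) (hα : ‖1 - α‖ ≤ r) (hZ : ‖Z‖ ≤ r) (hr : r ≤ 1) :
    ‖disc θ α Z - 4‖ ≤ r := by
  have hθα : ‖θ * (1 - α)‖ ≤ r := (norm_mul_le_of_norm_le_one hθ).trans hα
  have hsum : ‖Z + θ * (1 - α)‖ ≤ r := norm_add_le_of_le_of_le hZ hθα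
  have hZ1 : ‖Z + 1‖ ≤ 1 := norm_add_le_of_le_of_le (hZ.trans hr) norm_one.le
  have hsq : ‖(Z + θ * (1 - α)) ^ 2‖ ≤ r := by
    rw [norm_pow, sq]
    exact (mul_le_of_le_one_right (norm_nonneg _) (hsum.trans hr)).trans hsum
  have hlin : ‖4 * Z - 4 * ((1 - α) * (Z + 1))‖ ≤ r := by
    refine norm_sub_le_of_le_of_le ((norm_four_mul_le Z).trans hZ) ((norm_four_mul_le _).trans ?_)
    rw [mul_comm]
    exact (norm_mul_le_of_norm_le_one hZ1).trans hα
  rw [show disc θ α Z - 4 = (Z + θ * (1 - α)) ^ 2 + (4 * Z - 4 * ((1 - α) * (Z + 1))) by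
    unfold disc; ring]
  exact norm_add_le_of_le_of_le hsq hlin

lemma norm_sqrt_disc_sub_two_le (h2 : ‖(2 : K)‖ = 1) (hθ : ‖θ‖ ≤ 1) (hα : ‖1 - α‖ ≤ r)
    (hZ : ‖Z‖ ≤ r) (hr : r ≤ 1) (hs : s ^ 2 = disc θ α Z) (hs2 : ‖s - 2‖ < 1) : ‖s - 2‖ ≤ r :=
  norm_sub_two_le_of_norm_sq_sub_four_le h2 hs2 (hs ▸ norm_disc_sub_four_le hθ hα hZ hr)

lemma norm_fMinus_denom_eq (hθ : ‖θ‖ ≤ 1) (hα : ‖1 - α‖ ≤ r) (hZ : ‖Z‖ ≤ r)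
    (hs : ‖s - 2‖ ≤ r) (hr : r < ‖2 * (θ - 1)‖) : ‖(α + 1) * θ + Z - s‖ = ‖2 * (θ - 1)‖ := by
  rw [show (α + 1) * θ + Z - s = 2 * (θ - 1) + (Z - (s - 2) - θ * (1 - α)) by ring]
  refine norm_add_eq_left_of_norm_lt (lt_of_le_of_lt ?_ hr)
  exact norm_sub_le_of_le_of_le (norm_sub_le_of_le_of_le hZ hs)
    ((norm_mul_le_of_norm_le_one hθ).trans hα)

lemma norm_sub_sqrt_disc_sub_sub_sqrt_disc_le {X Y sX sY : K} (h2 : ‖(2 : K)‖ = 1)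
    (hθ : ‖θ‖ ≤ 1) (hα : ‖1 - α‖ ≤ r) (hX : ‖X‖ ≤ r) (hY : ‖Y‖ ≤ r) (hr : r < 1)
    (hsX : sX ^ 2 = disc θ α X) (hsY : sY ^ 2 = disc θ α Y)
    (hsXr : ‖sX - 2‖ ≤ r) (hsYr : ‖sY - 2‖ ≤ r) :
    ‖(X - sX) - (Y - sY)‖ ≤ ‖X - Y‖ * r := by
  have hsum : ‖sX + sY‖ = 1 := by
    rw [show sX + sY = 4 + ((sX - 2) + (sY - 2)) by ring]
    exact norm_four_add_eq_one h2 ((norm_add_le_of_le_of_le hsXr hsYr).trans_lt hr)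
  have hfactor :
      ‖(sX - 2) + (sY - 2) + 4 * (1 - α) - X - Y - 2 * (θ * (1 - α))‖ ≤ r := by
    have hθα : ‖θ * (1 - α)‖ ≤ r := (norm_mul_le_of_norm_le_one hθ).trans hα
    refine norm_sub_le_of_le_of_le (norm_sub_le_of_le_of_le (norm_sub_le_of_le_of_le
      (norm_add_le_of_le_of_le (norm_add_le_of_le_of_le hsXr hsYr) ?_) hX) hY) ?_
    · exact (norm_four_mul_le _).trans hα
    · rwa [norm_mul, h2, one_mul]
  -- sX² - sY² = D_X - D_Y is divisible by X - Y, and sX + sY is a unit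
  have hid : (sX + sY) * ((X - sX) - (Y - sY)) =
      (X - Y) * ((sX - 2) + (sY - 2) + 4 * (1 - α) - X - Y - 2 * (θ * (1 - α))) := by
    unfold disc at hsX hsY
    linear_combination hsY - hsX
  have hnorm := congrArg norm hid
  rw [norm_mul, norm_mul, hsum, one_mul] at hnorm
  rw [hnorm]
  exact mul_le_mul_of_nonneg_left hfactor (norm_nonneg _)

lemma norm_div_sub_div_le {c u v x y : K} {d : ℝ} (hc : c ≠ 0) (hu : ‖u‖ = ‖c‖)
    (hv : ‖v‖ = ‖c‖) (hy : ‖y‖ ≤ 1) (hxy : ‖x - y‖ ≤ d) (huv : ‖u - v‖ ≤ d * ‖c‖) :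
    ‖(u - c * (1 - x)) / u - (v - c * (1 - y)) / v‖ ≤ d := by
  have hc' : 0 < ‖c‖ := norm_pos_iff.mpr hc
  have hu0 : u ≠ 0 := norm_ne_zero_iff.mp (hu ▸ hc'.ne')
  have hv0 : v ≠ 0 := norm_ne_zero_iff.mp (hv ▸ hc'.ne')
  have hid : (u - c * (1 - x)) / u - (v - c * (1 - y)) / v =
      c * ((1 - y) * (u - v) + (x - y) * v) / (u * v) := by
    field_simp
    ring
  have hnum : ‖(1 - y) * (u - v) + (x - y) * v‖ ≤ d * ‖c‖ := by
    refine norm_add_le_of_le_of_le ((norm_mul_le_of_norm_le_one ?_).trans huv) ?_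
    · exact norm_sub_le_of_le_of_le norm_one.le hy
    · rw [norm_mul, hv]
      exact mul_le_mul_of_nonneg_right hxy (norm_nonneg _)
  rw [hid, norm_div, norm_mul, norm_mul, hu, hv, mul_div_mul_left _ _ hc'.ne']
  exact (div_le_iff₀ hc').mpr hnum

lemma norm_fMinus_sub_fMinus_le {X Y sX sY x y : K} {d : ℝ} (h2 : ‖(2 : K)‖ = 1)
    (hθ : ‖θ‖ ≤ 1) (hα : ‖1 - α‖ ≤ r) (hr : r < ‖2 * (θ - 1)‖) (hX : ‖X‖ ≤ r) (hY : ‖Y‖ ≤ r)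
    (hsX : sX ^ 2 = disc θ α X) (hsX2 : ‖sX - 2‖ < 1)
    (hsY : sY ^ 2 = disc θ α Y) (hsY2 : ‖sY - 2‖ < 1)
    (hy : ‖y‖ ≤ 1) (hxy : ‖x - y‖ ≤ d) (hXY : ‖X - Y‖ ≤ d) :
    ‖fMinus θ α X sX x - fMinus θ α Y sY y‖ ≤ d := by
  have hc1 : ‖2 * (θ - 1)‖ ≤ 1 :=
    (norm_mul_le_of_norm_le_one h2.le).trans (norm_sub_le_of_le_of_le hθ norm_one.le)
  have hr1 : r < 1 := hr.trans_le hc1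
  have hsXr := norm_sqrt_disc_sub_two_le h2 hθ hα hX hr1.le hsX hsX2
  have hsYr := norm_sqrt_disc_sub_two_le h2 hθ hα hY hr1.le hsY hsY2
  have hBXY : ‖((α + 1) * θ + X - sX) - ((α + 1) * θ + Y - sY)‖ ≤ d * ‖2 * (θ - 1)‖ := by
    rw [show (α + 1) * θ + X - sX - ((α + 1) * θ + Y - sY) = (X - sX) - (Y - sY) by ring]
    refine (norm_sub_sqrt_disc_sub_sub_sqrt_disc_le h2 hθ hα hX hY hr1 hsX hsY hsXr hsYr).trans
      (mul_le_mul hXY hr.le ((norm_nonneg _).trans hX) ((norm_nonneg _).trans hXY))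
  have hnum : ∀ Z s z : K, 2 * (θ - 1) * z + (α - 1) * θ + Z - s + 2 =
      ((α + 1) * θ + Z - s) - 2 * (θ - 1) * (1 - z) := fun _ _ _ => by ring
  rw [fMinus, fMinus, hnum, hnum]
  exact norm_div_sub_div_le (norm_pos_iff.mp (((norm_nonneg _).trans hX).trans_lt hr))
    (norm_fMinus_denom_eq hθ hα hX hsXr hr) (norm_fMinus_denom_eq hθ hα hY hsYr hr)
    hy hxy hBXY

end Potts

open Potts IsUltrametricDist in
theorem potts_Fminus_contraction_general (p : ℕ) [Fact p.Prime] (hp : 3 ≤ p)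
    (θ α : ℚ_[p]) (hθ : ‖θ - 1‖ = 1 / (p : ℝ))
    (hα1 : ‖1 - α‖ ≤ 1 / (p : ℝ) ^ 2)
    (L : ℕ → ℚ_[p])
    (hLlt : ∀ i, 2 ≤ i → ‖L i‖ < 1)
    (δ : ℝ)
    (hδub : ∀ i, 2 ≤ i → ‖L i‖ ≤ δ) (hδmax : ∃ i, 2 ≤ i ∧ ‖L i‖ = δ)
    (x y : ℕ → ℚ_[p])
    (hxten : Tendsto (fun i => ‖x i‖) atTop (nhds 0))
    (hyten : Tendsto (fun i => ‖y i‖) atTop (nhds 0))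
    (hxB : ∀ i, 2 ≤ i → ‖x i‖ ≤ δ / (p : ℝ))
    (hyB : ∀ i, 2 ≤ i → ‖y i‖ ≤ δ / (p : ℝ))
    (X Y : ℚ_[p]) (hX : X = ∑' j : ℕ, x (j + 2)) (hY : Y = ∑' j : ℕ, y (j + 2))
    (sX sY : ℚ_[p])
    (hsX : sX ^ 2 = (X + θ * (1 - α)) ^ 2 + 4 * α * (X + 1)) (hsX2 : ‖sX - 2‖ < 1)
    (hsY : sY ^ 2 = (Y + θ * (1 - α)) ^ 2 + 4 * α * (Y + 1)) (hsY2 : ‖sY - 2‖ < 1) :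
    ∀ i, 2 ≤ i →
      ‖L i * ((2 * (θ - 1) * x i + (α - 1) * θ + X - sX + 2) /
            ((α + 1) * θ + X - sX)) -
        L i * ((2 * (θ - 1) * y i + (α - 1) * θ + Y - sY + 2) /
            ((α + 1) * θ + Y - sY))‖
        ≤ δ * ⨆ j : ℕ, ‖x (j + 2) - y (j + 2)‖ := by
  intro i hi
  obtain ⟨k, rfl⟩ := Nat.exists_eq_add_of_le' hi
  have hδ1 : δ < 1 := by
    obtain ⟨i₀, hi₀, rfl⟩ := hδmax
    exact hLlt i₀ hi₀
  have hp1 : (1 : ℝ) < p := by exact_mod_cast (by omega : 1 < p)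
  have h2 : ‖(2 : ℚ_[p])‖ = 1 := Padic.norm_two_eq_one (by omega)
  have hθ1 : ‖θ‖ ≤ 1 := by
    rw [← sub_add_cancel θ 1]
    exact norm_add_le_of_le_of_le (hθ.trans_le (div_le_one_of_le₀ hp1.le (by positivity)))
      norm_one.le
  set r := max (δ / p) (1 / (p : ℝ) ^ 2)
  have hrc : r < ‖2 * (θ - 1)‖ := by
    rw [norm_mul, h2, hθ, one_mul]
    refine max_lt (by gcongr) ?_
    rw [sq, one_div_lt_one_div (by positivity) (by positivity)]
    exact lt_mul_of_one_lt_left (by positivity) hp1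
  have hXr : ‖X‖ ≤ r :=
    hX ▸ (norm_tsum_le_of_forall_le fun j => hxB _ (by omega)).trans (le_max_left _ _)
  have hYr : ‖Y‖ ≤ r :=
    hY ▸ (norm_tsum_le_of_forall_le fun j => hyB _ (by omega)).trans (le_max_left _ _)
  set d := ⨆ j : ℕ, ‖x (j + 2) - y (j + 2)‖
  have hd : ∀ j, ‖x (j + 2) - y (j + 2)‖ ≤ d := le_ciSup ⟨δ / p, by
    rintro - ⟨j, rfl⟩
    exact norm_sub_le_of_le_of_le (hxB _ (by omega)) (hyB _ (by omega))⟩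
  have hXY : ‖X - Y‖ ≤ d := hX ▸ hY ▸ norm_tsum_sub_tsum_le
    ((summable_nat_add_iff 2).mpr (summable_of_tendsto_norm_zero hxten))
    ((summable_nat_add_iff 2).mpr (summable_of_tendsto_norm_zero hyten)) hd
  rw [← mul_sub, norm_mul]
  refine mul_le_mul (hδub _ hi) ?_ (norm_nonneg _) ((norm_nonneg _).trans (hδub _ hi))
  have hy : ‖y (k + 2)‖ ≤ 1 := (hyB _ hi).trans ((div_le_one₀ (by positivity)).mpr (by linarith))
  exact norm_fMinus_sub_fMinus_le h2 hθ1 (hα1.trans (le_max_right _ _)) hrc hXr hYr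
    hsX hsX2 hsY hsY2 hy (hd k) hXY

/-- Under the conditions `|θ-1|_p = 1/p`, `|α|_p = 1`,
`|1-α|_p ≤ 1/p²`, and with a weight `λ` satisfying `λ(0) = 1`, `λ(1) = α`,
`|λ(i)|_p < 1` for `i ≥ 2`, `|λ(i)|_p → 0`, `δ = max_{i≥2}|λ(i)|_p > 0`,
one has `‖F⁻(x) - F⁻(y)‖ ≤ δ·‖x - y‖` for all `x, y ∈ B_{δ/p}`
(sup-norm on sequences indexed by `i ≥ 2`), i.e. `F⁻` is a strict
contraction on `B_{δ/p}`. -/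
theorem potts_Fminus_contraction (p : ℕ) [Fact p.Prime] (hp : 3 ≤ p)
    (θ α : ℚ_[p]) (hθ : ‖θ - 1‖ = 1 / (p : ℝ)) (hα : ‖α‖ = 1)
    (hα1 : ‖1 - α‖ ≤ 1 / (p : ℝ) ^ 2)
    (L : ℕ → ℚ_[p]) (hL0 : L 0 = 1) (hL1 : L 1 = α)
    (hLlt : ∀ i, 2 ≤ i → ‖L i‖ < 1)
    (hLten : Tendsto (fun i => ‖L i‖) atTop (nhds 0))
    (δ : ℝ) (hδpos : 0 < δ)
    (hδub : ∀ i, 2 ≤ i → ‖L i‖ ≤ δ) (hδmax : ∃ i, 2 ≤ i ∧ ‖L i‖ = δ)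
    (x y : ℕ → ℚ_[p])
    (hxten : Tendsto (fun i => ‖x i‖) atTop (nhds 0))
    (hyten : Tendsto (fun i => ‖y i‖) atTop (nhds 0))
    (hxB : ∀ i, 2 ≤ i → ‖x i‖ ≤ δ / (p : ℝ))
    (hyB : ∀ i, 2 ≤ i → ‖y i‖ ≤ δ / (p : ℝ))
    (X Y : ℚ_[p]) (hX : X = ∑' j : ℕ, x (j + 2)) (hY : Y = ∑' j : ℕ, y (j + 2))
    (sX sY : ℚ_[p])
    (hsX : sX ^ 2 = (X + θ * (1 - α)) ^ 2 + 4 * α * (X + 1)) (hsX2 : ‖sX - 2‖ < 1)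
    (hsY : sY ^ 2 = (Y + θ * (1 - α)) ^ 2 + 4 * α * (Y + 1)) (hsY2 : ‖sY - 2‖ < 1) :
    ∀ i, 2 ≤ i →
      ‖L i * ((2 * (θ - 1) * x i + (α - 1) * θ + X - sX + 2) /
            ((α + 1) * θ + X - sX)) -
        L i * ((2 * (θ - 1) * y i + (α - 1) * θ + Y - sY + 2) /
            ((α + 1) * θ + Y - sY))‖
        ≤ δ * ⨆ j : ℕ, ‖x (j + 2) - y (j + 2)‖ :=
  potts_Fminus_contraction_general p hp θ α hθ hα1 L hLlt δ hδub hδmax x y hxten hyten hxB hyB X Y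
    hX hY sX sY hsX hsX2 hsY hsY2
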